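/- arXiv:2604.14500 — 4 statements merged into one kernel-verified Lean document; each statement's English description precedes it below -/
import Mathlib

section
/- Let n ≥ 2 and let A be an injective linear endomorphism of the Euclidean space ℝⁿ. If A preserves cosine similarity, i.e. for all nonzero vectors u, v one has ⟪A u, A v⟫ / (‖A u‖ · ‖A v‖) = ⟪u, v⟫ / (‖u‖ · ‖v‖), then there exists a constant c > 0 such that ⟪A u, A v⟫ = c · ⟪u, v⟫ for all u, v (equivalently, AᵀA = c·I). In particular, cosine similarity between parameter vectors is invariant under a linear reparameterization θ ↦ Aθ only when AᵀA is a positive multiple of the identity. -/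
open scoped RealInnerProductSpace

/-- If an injective linear endomorphism `A` of Euclidean space `ℝⁿ`
(`n ≥ 2`) preserves cosine similarity of all pairs of nonzero vectors, then there is a
constant `c > 0` with `⟪A u, A v⟫ = c * ⟪u, v⟫` for all `u, v`. -/
theorem cosine_similarity_preserving_iff_conformal
    (n : ℕ) (hn : 2 ≤ n)
    (A : EuclideanSpace ℝ (Fin n) →ₗ[ℝ] EuclideanSpace ℝ (Fin n))
    (hA : Function.Injective A)
    (hcos : ∀ u v : EuclideanSpace ℝ (Fin n), u ≠ 0 → v ≠ 0 →
      ⟪A u, A v⟫ / (‖A u‖ * ‖A v‖) = ⟪u, v⟫ / (‖u‖ * ‖v‖)) :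
    ∃ c : ℝ, 0 < c ∧
      ∀ u v : EuclideanSpace ℝ (Fin n), ⟪A u, A v⟫ = c * ⟪u, v⟫ := by
  -- `A` sends nonzero vectors to nonzero vectors
  have hAnz : ∀ u : EuclideanSpace ℝ (Fin n), u ≠ 0 → A u ≠ 0 := by
    intro u hu h
    exact hu (hA (by simpa using h))
  -- `A` preserves orthogonality of nonzero vectors
  have hperp : ∀ u v : EuclideanSpace ℝ (Fin n), u ≠ 0 → v ≠ 0 →
      ⟪u, v⟫ = 0 → ⟪A u, A v⟫ = 0 := by
    intro u v hu hv h0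
    have h := hcos u v hu hv
    rw [h0, zero_div] at h
    have hd : ‖A u‖ * ‖A v‖ ≠ 0 :=
      mul_ne_zero (norm_ne_zero_iff.2 (hAnz u hu)) (norm_ne_zero_iff.2 (hAnz v hv))
    exact (div_eq_zero_iff.1 h).resolve_right hd
  -- orthogonal vectors of equal norm map to vectors of equal norm
  have heq : ∀ u v : EuclideanSpace ℝ (Fin n), u ≠ 0 → v ≠ 0 →
      ⟪u, v⟫ = 0 → ‖u‖ = ‖v‖ → ‖A u‖ = ‖A v‖ := by
    intro u v hu hv h0 hnorm
    have h0' : ⟪v, u⟫ = 0 := by rwa [real_inner_comm]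
    have hup : (u + v : EuclideanSpace ℝ (Fin n)) ≠ 0 := by
      intro h
      have : ⟪u, u + v⟫ = 0 := by rw [h, inner_zero_right]
      rw [inner_add_right, h0, add_zero] at this
      exact hu (inner_self_eq_zero.1 this)
    have hum : (u - v : EuclideanSpace ℝ (Fin n)) ≠ 0 := by
      intro h
      have : ⟪u, u - v⟫ = 0 := by rw [h, inner_zero_right]
      rw [inner_sub_right, h0, sub_zero] at this
      exact hu (inner_self_eq_zero.1 this)
    have hpm : ⟪u + v, u - v⟫ = (0 : ℝ) := by
      have hn2 : ⟪u, u⟫ = ⟪v, v⟫ := by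
        rw [real_inner_self_eq_norm_sq, real_inner_self_eq_norm_sq, hnorm]
      rw [inner_sub_right, inner_add_left, inner_add_left, h0, h0', hn2]
      ring
    have := hperp _ _ hup hum hpm
    rw [map_add, map_sub, inner_sub_right, inner_add_left, inner_add_left] at this
    have hAuv : ⟪A u, A v⟫ = 0 := hperp u v hu hv h0
    have hAvu : ⟪A v, A u⟫ = 0 := by rwa [real_inner_comm] at hAuv
    rw [hAuv, hAvu] at this
    have : ⟪A u, A u⟫ = ⟪A v, A v⟫ := by linarith
    rw [real_inner_self_eq_norm_sq, real_inner_self_eq_norm_sq] at this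
    have h1 : (0:ℝ) ≤ ‖A u‖ := norm_nonneg _
    have h2 : (0:ℝ) ≤ ‖A v‖ := norm_nonneg _
    nlinarith [this, h1, h2, sq_nonneg (‖A u‖ - ‖A v‖), sq_nonneg (‖A u‖ + ‖A v‖)]
  -- scaling version: for orthogonal nonzero u, v
  have hscale : ∀ u v : EuclideanSpace ℝ (Fin n), u ≠ 0 → v ≠ 0 →
      ⟪u, v⟫ = 0 → ‖A v‖^2 * ‖u‖^2 = ‖A u‖^2 * ‖v‖^2 := by
    intro u v hu hv h0
    have hvn : ‖v‖ ≠ 0 := norm_ne_zero_iff.2 hv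
    have hun : ‖u‖ ≠ 0 := norm_ne_zero_iff.2 hu
    set t : ℝ := ‖u‖ / ‖v‖ with ht
    have htpos : 0 < t := div_pos (norm_pos_iff.2 hu) (norm_pos_iff.2 hv)
    have htv : (t • v : EuclideanSpace ℝ (Fin n)) ≠ 0 :=
      smul_ne_zero (ne_of_gt htpos) hv
    have h0' : ⟪u, t • v⟫ = (0 : ℝ) := by
      rw [inner_smul_right, h0, mul_zero]
    have hnorm : ‖u‖ = ‖(t • v : EuclideanSpace ℝ (Fin n))‖ := by
      rw [norm_smul, Real.norm_eq_abs, abs_of_pos htpos, ht,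
        div_mul_cancel₀ _ hvn]
    have hkey := heq u (t • v) hu htv h0' hnorm
    rw [map_smul, norm_smul, Real.norm_eq_abs, abs_of_pos htpos] at hkey
    have : ‖A u‖ = ‖u‖ / ‖v‖ * ‖A v‖ := hkey
    field_simp at this
    linear_combination (-(‖u‖ * ‖A v‖ + ‖A u‖ * ‖v‖)) * this
  -- the distinguished basis vector
  set e : EuclideanSpace ℝ (Fin n) := EuclideanSpace.single (⟨0, by omega⟩ : Fin n) (1 : ℝ)
    with he
  have hen : ‖e‖ = 1 := by
    rw [he, EuclideanSpace.norm_single, norm_one]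
  have he0 : e ≠ 0 := by
    intro h; rw [h, norm_zero] at hen; norm_num at hen
  set c : ℝ := ‖A e‖^2 with hc
  have hcpos : 0 < c := pow_pos (norm_pos_iff.2 (hAnz e he0)) 2
  -- norm identity: ‖A v‖² = c ‖v‖²
  have hnormsq : ∀ v : EuclideanSpace ℝ (Fin n), ‖A v‖^2 = c * ‖v‖^2 := by
    intro v
    set a : ℝ := ⟪e, v⟫ with ha
    set w : EuclideanSpace ℝ (Fin n) := v - a • e with hw
    have hew : ⟪e, w⟫ = (0 : ℝ) := by
      rw [hw, inner_sub_right, inner_smul_right, real_inner_self_eq_norm_sq, hen]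
      simp [ha]
    have hv : v = a • e + w := by rw [hw]; abel
    have hAw : ‖A w‖^2 = c * ‖w‖^2 := by
      by_cases hw0 : w = 0
      · rw [hw0]; simp
      · have := hscale e w he0 hw0 hew
        rw [hen] at this
        rw [hc]
        linarith [this]
    have hcross : ⟪A e, A w⟫ = (0 : ℝ) := by
      by_cases hw0 : w = 0
      · rw [hw0]; simp
      · exact hperp e w he0 hw0 hew
    have hvnorm : ‖v‖^2 = a^2 + ‖w‖^2 := by
      have hcr : ⟪a • e, w⟫ = (0:ℝ) := by
        rw [real_inner_smul_left, hew, mul_zero]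
      rw [hv, norm_add_sq_real, hcr, norm_smul, Real.norm_eq_abs, hen]
      rw [mul_pow, sq_abs]
      ring
    have hAvnorm : ‖A v‖^2 = a^2 * c + ‖A w‖^2 := by
      have hAv : A v = a • A e + A w := by rw [hv, map_add, map_smul]
      have hcr : ⟪a • A e, A w⟫ = (0:ℝ) := by
        rw [real_inner_smul_left, hcross, mul_zero]
      rw [hAv, norm_add_sq_real, hcr, norm_smul, Real.norm_eq_abs]
      rw [mul_pow, sq_abs, hc]
      ring
    rw [hAvnorm, hAw, hvnorm]; ring
  -- polarization
  refine ⟨c, hcpos, fun u v => ?_⟩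
  have h1 : ‖A (u + v)‖^2 = c * ‖u + v‖^2 := hnormsq (u + v)
  rw [map_add] at h1
  have h2 : ‖A u + A v‖^2 = ‖A u‖^2 + 2 * ⟪A u, A v⟫ + ‖A v‖^2 := by
    rw [norm_add_sq_real]
  have h3 : ‖u + v‖^2 = ‖u‖^2 + 2 * ⟪u, v⟫ + ‖v‖^2 := by
    rw [norm_add_sq_real]
  have h4 := hnormsq u
  have h5 := hnormsq v
  nlinarith [h1, h2, h3, h4, h5]
end

section
/- Let n ≥ 2 and let w : Fin n → ℝ be a non-constant logit vector. Then the function α ↦ H(softmax(α • w)) is strictly decreasing on (0, ∞); in particular, for every α > 1, H(softmax(α • w)) < H(softmax(w)). Hence routing entropy is not invariant under logit scaling. -/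
/-- The softmax function on `ℝⁿ`. -/
noncomputable def softmax {n : ℕ} (u : Fin n → ℝ) : Fin n → ℝ :=
  fun i => Real.exp (u i) / ∑ j, Real.exp (u j)

/-- Shannon entropy of a probability vector (with the convention `0 · log 0 = 0`,
which holds since `Real.log 0 = 0` in Mathlib). -/
noncomputable def entropy {n : ℕ} (p : Fin n → ℝ) : ℝ :=
  -∑ i, p i * Real.log (p i)

/-!
Write `Z(α) = ∑ᵢ exp (α wᵢ)`. Since `log softmax(α • w)ᵢ = α wᵢ - log Z(α)`, the entropy is
`log Z(α) - α Z'(α) / Z(α)`, and differentiating gives `-α (Z Z'' - Z'²) / Z²`. Here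
`(Z Z'' - Z'²) / Z²` is the variance of `w` under `softmax (α • w)`, which by Lagrange's identity
`2 (Z Z'' - Z'²) = ∑ᵢ ∑ⱼ exp (α wᵢ) exp (α wⱼ) (wᵢ - wⱼ)²` is positive for non-constant `w`.
-/

open Real Finset

section WeightedVariance

variable {ι R : Type*} [Fintype ι]

theorem two_mul_sum_mul_sum_mul_sq_sub_sq [CommRing R] (c x : ι → R) :
    2 * ((∑ i, c i) * (∑ i, c i * x i ^ 2) - (∑ i, c i * x i) ^ 2) =
      ∑ i, ∑ j, c i * c j * (x i - x j) ^ 2 := by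
  have hterm : ∀ i j, c i * c j * (x i - x j) ^ 2 =
      c j * (c i * x i ^ 2) - 2 * ((c i * x i) * (c j * x j)) + c i * (c j * x j ^ 2) :=
    fun i j => by ring
  simp only [hterm, sum_add_distrib, sum_sub_distrib, ← mul_sum, ← sum_mul]
  ring

theorem sq_sum_mul_lt_sum_mul_sum_mul_sq [CommRing R] [LinearOrder R] [IsStrictOrderedRing R]
    {c : ι → R} (hc : ∀ i, 0 < c i) {x : ι → R} (hx : ∃ i j, x i ≠ x j) :
    (∑ i, c i * x i) ^ 2 < (∑ i, c i) * ∑ i, c i * x i ^ 2 := by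
  obtain ⟨i, j, hij⟩ := hx
  have hterm : ∀ k l, 0 ≤ c k * c l * (x k - x l) ^ 2 :=
    fun k l => mul_nonneg (mul_pos (hc k) (hc l)).le (sq_nonneg _)
  have hpos : 0 < ∑ k, ∑ l, c k * c l * (x k - x l) ^ 2 :=
    sum_pos' (fun k _ => sum_nonneg fun l _ => hterm k l)
      ⟨i, mem_univ _, sum_pos' (fun l _ => hterm i l)
        ⟨j, mem_univ _, mul_pos (mul_pos (hc i) (hc j)) (sq_pos_of_ne_zero (sub_ne_zero.2 hij))⟩⟩
  linarith [two_mul_sum_mul_sum_mul_sq_sub_sq c x]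

end WeightedVariance

theorem entropy_softmax {n : ℕ} (u : Fin n → ℝ) :
    entropy (softmax u) = log (∑ i, exp (u i)) - (∑ i, exp (u i) * u i) / ∑ i, exp (u i) := by
  rcases isEmpty_or_nonempty (Fin n) with _ | ⟨⟨i₀⟩⟩
  · simp [entropy]
  set Z := ∑ i, exp (u i)
  have hZ : 0 < Z := sum_pos (fun i _ => exp_pos _) ⟨i₀, mem_univ _⟩
  have hterm : ∀ i, softmax u i * log (softmax u i) = (exp (u i) * u i - exp (u i) * log Z) / Z :=
    fun i => by
      rw [softmax, log_div (exp_ne_zero _) hZ.ne', log_exp]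
      ring
  simp only [entropy, hterm, ← sum_div, sum_sub_distrib, ← sum_mul]
  field_simp
  ring

theorem entropy_softmax_smul {n : ℕ} (w : Fin n → ℝ) (α : ℝ) :
    entropy (softmax (α • w)) = log (∑ i, exp (α * w i)) -
      α * (∑ i, exp (α * w i) * w i) / ∑ i, exp (α * w i) := by
  simp only [entropy_softmax, Pi.smul_apply, smul_eq_mul, mul_sum]
  congr 2
  exact sum_congr rfl fun i _ => by ring

theorem hasDerivAt_entropy_softmax_smul {n : ℕ} [NeZero n] (w : Fin n → ℝ) (α : ℝ) :
    HasDerivAt (fun β => entropy (softmax (β • w)))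
      (-(α * ((∑ i, exp (α * w i)) * (∑ i, exp (α * w i) * w i ^ 2) -
        (∑ i, exp (α * w i) * w i) ^ 2)) / (∑ i, exp (α * w i)) ^ 2) α := by
  have hZ : 0 < ∑ i, exp (α * w i) := sum_pos (fun i _ => exp_pos _) univ_nonempty
  have hZ' : HasDerivAt (fun β => ∑ i, exp (β * w i)) (∑ i, exp (α * w i) * w i) α :=
    HasDerivAt.fun_sum fun i _ => (hasDerivAt_mul_const (w i)).exp
  have hE' : HasDerivAt (fun β => ∑ i, exp (β * w i) * w i) (∑ i, exp (α * w i) * w i ^ 2) α :=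
    HasDerivAt.fun_sum fun i _ => by
      simpa [pow_two, mul_assoc] using ((hasDerivAt_mul_const (w i)).exp).mul_const (w i)
  simp only [entropy_softmax_smul]
  refine ((hZ'.log hZ.ne').fun_sub
    (((hasDerivAt_id' α).fun_mul hE').fun_div hZ' hZ.ne')).congr_deriv ?_
  field_simp
  ring

theorem entropy_softmax_strictAnti_general {n : ℕ} (w : Fin n → ℝ)
    (hw : ∃ i j, w i ≠ w j) :
    StrictAntiOn (fun α : ℝ => entropy (softmax (α • w))) (Set.Ioi 0) ∧
    ∀ α : ℝ, 1 < α → entropy (softmax (α • w)) < entropy (softmax w) := by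
  have : NeZero n := NeZero.of_pos hw.choose.pos
  have hanti : StrictAntiOn (fun α : ℝ => entropy (softmax (α • w))) (Set.Ioi 0) := by
    refine strictAntiOn_of_hasDerivWithinAt_neg (convex_Ioi 0)
      (fun α _ => (hasDerivAt_entropy_softmax_smul w α).continuousAt.continuousWithinAt)
      (fun α _ => (hasDerivAt_entropy_softmax_smul w α).hasDerivWithinAt) fun α hα => ?_
    rw [interior_Ioi, Set.mem_Ioi] at hα
    have hvar := sq_sum_mul_lt_sum_mul_sum_mul_sq (fun i => exp_pos (α * w i)) hw
    exact div_neg_of_neg_of_pos (neg_neg_of_pos (mul_pos hα (sub_pos.2 hvar))) (by positivity)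
  refine ⟨hanti, fun α hα => ?_⟩
  simpa using hanti (Set.mem_Ioi.2 one_pos) (Set.mem_Ioi.2 (one_pos.trans hα)) hα

/-- For `n ≥ 2` and a non-constant logit vector `w`, the map
`α ↦ H(softmax (α • w))` is strictly decreasing on `(0, ∞)`; in particular for every
`α > 1`, `H(softmax (α • w)) < H(softmax w)`. -/
theorem entropy_softmax_strictAnti {n : ℕ} (hn : 2 ≤ n) (w : Fin n → ℝ)
    (hw : ∃ i j, w i ≠ w j) :
    StrictAntiOn (fun α : ℝ => entropy (softmax (α • w))) (Set.Ioi 0) ∧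
    ∀ α : ℝ, 1 < α → entropy (softmax (α • w)) < entropy (softmax w) :=
  entropy_softmax_strictAnti_general w hw
end

section
/- Let w : Fin n → ℝ. The function f(α) = H(softmax(α • w)) is differentiable on ℝ, and its derivative is f'(α) = −α · ( ∑ᵢ p i · (w i)² − ( ∑ᵢ p i · w i )² ), where p = softmax(α • w); i.e., the derivative equals −α times the variance of the logits w under the distribution softmax(α • w). -/
/-!
With `Z(α) = ∑ⱼ exp (α wⱼ)` and `p = softmax (α • w)` we have `log pᵢ = α wᵢ - log Z`, so
`H(p) = log Z - α 𝔼ₚ[w]`. Differentiating, `(log Z)' = 𝔼ₚ[w]` and `(𝔼ₚ[w])' = Varₚ(w)`, hence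
`H' = 𝔼ₚ[w] - 𝔼ₚ[w] - α Varₚ(w)`.
-/

open Real Finset

namespace Softmax

variable {n : ℕ}

theorem sum_exp_pos [Nonempty (Fin n)] (u : Fin n → ℝ) : 0 < ∑ j, exp (u j) :=
  sum_pos (fun j _ => exp_pos (u j)) univ_nonempty

theorem sum_softmax_mul (u c : Fin n → ℝ) :
    ∑ i, softmax u i * c i = (∑ i, c i * exp (u i)) / ∑ j, exp (u j) := by
  rw [sum_div]
  exact sum_congr rfl fun i _ => by rw [softmax]; ring

theorem sum_softmax [Nonempty (Fin n)] (u : Fin n → ℝ) : ∑ i, softmax u i = 1 := by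
  simpa [div_self (sum_exp_pos u).ne'] using sum_softmax_mul u 1

theorem log_softmax (u : Fin n → ℝ) (i : Fin n) :
    log (softmax u i) = u i - log (∑ j, exp (u j)) := by
  have : Nonempty (Fin n) := ⟨i⟩
  rw [softmax, log_div (exp_ne_zero _) (sum_exp_pos u).ne', log_exp]

theorem entropy_softmax (u : Fin n → ℝ) :
    entropy (softmax u) = log (∑ j, exp (u j)) - ∑ i, softmax u i * u i := by
  rcases isEmpty_or_nonempty (Fin n) with _ | _
  · simp [entropy]
  · simp only [entropy, log_softmax, mul_sub, sum_sub_distrib, ← sum_mul, sum_softmax]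
    ring

theorem hasDerivAt_sum_mul_exp_mul (c w : Fin n → ℝ) (α : ℝ) :
    HasDerivAt (fun α => ∑ j, c j * exp (α * w j)) (∑ j, c j * w j * exp (α * w j)) α :=
  HasDerivAt.fun_sum fun j _ =>
    (((hasDerivAt_mul_const (w j)).exp).const_mul (c j)).congr_deriv (by ring)

theorem hasDerivAt_sum_exp_mul (w : Fin n → ℝ) (α : ℝ) :
    HasDerivAt (fun α => ∑ j, exp (α * w j)) (∑ j, w j * exp (α * w j)) α := by
  simpa using hasDerivAt_sum_mul_exp_mul 1 w α

theorem hasDerivAt_log_sum_exp_mul (w : Fin n → ℝ) (α : ℝ) :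
    HasDerivAt (fun α => log (∑ j, exp (α * w j))) (∑ i, softmax (α • w) i * w i) α := by
  rcases isEmpty_or_nonempty (Fin n) with _ | _
  · simpa using hasDerivAt_const α (0 : ℝ)
  · refine ((hasDerivAt_sum_exp_mul w α).log (sum_exp_pos _).ne').congr_deriv ?_
    simp only [sum_softmax_mul, Pi.smul_apply, smul_eq_mul]

theorem hasDerivAt_sum_softmax_smul_mul (w c : Fin n → ℝ) (α : ℝ) :
    HasDerivAt (fun α => ∑ i, softmax (α • w) i * c i)
      (∑ i, softmax (α • w) i * (c i * w i) -
        (∑ i, softmax (α • w) i * c i) * ∑ i, softmax (α • w) i * w i) α := by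
  rcases isEmpty_or_nonempty (Fin n) with _ | _
  · simpa using hasDerivAt_const α (0 : ℝ)
  · have hZ : ∑ j, exp (α * w j) ≠ 0 := (sum_exp_pos _).ne'
    simp only [sum_softmax_mul, Pi.smul_apply, smul_eq_mul]
    refine ((hasDerivAt_sum_mul_exp_mul c w α).fun_div
      (hasDerivAt_sum_exp_mul w α) hZ).congr_deriv ?_
    rw [sq, sub_div, mul_div_mul_right _ _ hZ, div_mul_div_comm]

theorem entropy_softmax_smul (w : Fin n → ℝ) (α : ℝ) :
    entropy (softmax (α • w)) = log (∑ j, exp (α * w j)) - α * ∑ i, softmax (α • w) i * w i := by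
  simp only [entropy_softmax, Pi.smul_apply, smul_eq_mul, mul_left_comm _ α, ← mul_sum]

theorem hasDerivAt_entropy_softmax_smul (w : Fin n → ℝ) (α : ℝ) :
    HasDerivAt (fun α : ℝ => entropy (softmax (α • w)))
      (-α * (∑ i, softmax (α • w) i * w i ^ 2 - (∑ i, softmax (α • w) i * w i) ^ 2)) α := by
  simp only [entropy_softmax_smul]
  refine ((hasDerivAt_log_sum_exp_mul w α).sub
    ((hasDerivAt_id α).mul (hasDerivAt_sum_softmax_smul_mul w w α))).congr_deriv ?_
  simp only [id, sq]
  ring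

end Softmax

open Softmax in
/-- The function `f(α) = H(softmax (α • w))` is differentiable on `ℝ`
and its derivative at `α` equals `−α` times the variance of the logits `w` under the
distribution `p = softmax (α • w)`. -/
theorem entropy_softmax_hasDerivAt {n : ℕ} (w : Fin n → ℝ) :
    Differentiable ℝ (fun α : ℝ => entropy (softmax (α • w))) ∧
    ∀ α : ℝ,
      HasDerivAt (fun α : ℝ => entropy (softmax (α • w)))
        (-α * (∑ i, softmax (α • w) i * (w i) ^ 2 -
               (∑ i, softmax (α • w) i * w i) ^ 2)) α :=
  ⟨fun α => (hasDerivAt_entropy_softmax_smul w α).differentiableAt,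
    hasDerivAt_entropy_softmax_smul w⟩
end

section
/- Let T : Fin m → Fin n → ℝ be a column-stochastic matrix, i.e. T j i ≥ 0 for all j, i and ∑ⱼ T j i = 1 for every i, and define (T p) j = ∑ᵢ T j i · p i. Then for all p, q in the probability simplex Δ^{n-1}, the images T p and T q lie in Δ^{m-1}, the Bhattacharyya coefficient does not decrease: ∑ⱼ √((T p) j · (T q) j) ≥ ∑ᵢ √(p i · q i), and consequently d_FR(T p, T q) ≤ d_FR(p, q). -/
/-- The Fisher–Rao distance on the probability simplex. -/
noncomputable def dFR {n : ℕ} (p q : Fin n → ℝ) : ℝ :=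
  2 * Real.arccos (∑ i, Real.sqrt (p i * q i))

/-- Cauchy–Schwarz step: `∑ √(aᵢ bᵢ) ≤ √((∑ aᵢ)(∑ bᵢ))` for nonnegative `a b`. -/
lemma sum_sqrt_mul_le {n : ℕ} (a b : Fin n → ℝ) (ha : ∀ i, 0 ≤ a i) (hb : ∀ i, 0 ≤ b i) :
    ∑ i, Real.sqrt (a i * b i) ≤ Real.sqrt ((∑ i, a i) * (∑ i, b i)) := by
  have h := Finset.sum_sq_le_sum_mul_sum_of_sq_eq_mul (Finset.univ : Finset (Fin n))
    (r := fun i => Real.sqrt (a i * b i)) (f := a) (g := b)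
    (fun i _ => ha i) (fun i _ => hb i)
    (fun i _ => Real.sq_sqrt (mul_nonneg (ha i) (hb i)))
  have hnn : 0 ≤ ∑ i, Real.sqrt (a i * b i) :=
    Finset.sum_nonneg fun i _ => Real.sqrt_nonneg _
  exact (Real.le_sqrt hnn (mul_nonneg (Finset.sum_nonneg fun i _ => ha i)
    (Finset.sum_nonneg fun i _ => hb i))).mpr h

lemma arccos_anti {x y : ℝ} (h : x ≤ y) : Real.arccos y ≤ Real.arccos x := by
  unfold Real.arccos
  have := Real.monotone_arcsin h
  linarith

/-- A column-stochastic matrix `T` maps the simplex `Δ^{n-1}` into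
`Δ^{m-1}`, does not decrease the Bhattacharyya coefficient, and hence does not increase
the Fisher–Rao distance (monotonicity under Markov maps / Chentsov). -/
theorem fisherRao_monotone_under_stochastic_map {m n : ℕ}
    (T : Fin m → Fin n → ℝ)
    (hT : ∀ j i, 0 ≤ T j i) (hTcol : ∀ i, ∑ j, T j i = 1)
    (p q : Fin n → ℝ)
    (hp : ∀ i, 0 ≤ p i) (hp1 : ∑ i, p i = 1)
    (hq : ∀ i, 0 ≤ q i) (hq1 : ∑ i, q i = 1) :
    (∀ j, 0 ≤ ∑ i, T j i * p i) ∧ (∑ j, ∑ i, T j i * p i) = 1 ∧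
    (∀ j, 0 ≤ ∑ i, T j i * q i) ∧ (∑ j, ∑ i, T j i * q i) = 1 ∧
    (∑ i, Real.sqrt (p i * q i)) ≤
      ∑ j, Real.sqrt ((∑ i, T j i * p i) * (∑ i, T j i * q i)) ∧
    dFR (fun j => ∑ i, T j i * p i) (fun j => ∑ i, T j i * q i) ≤ dFR p q := by
  have hpos : ∀ r : Fin n → ℝ, (∀ i, 0 ≤ r i) → ∀ j, 0 ≤ ∑ i, T j i * r i :=
    fun r hr j => Finset.sum_nonneg fun i _ => mul_nonneg (hT j i) (hr i)
  have hsum : ∀ r : Fin n → ℝ, (∑ i, r i = 1) → (∑ j, ∑ i, T j i * r i) = 1 := by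
    intro r hr
    rw [Finset.sum_comm]
    simp_rw [← Finset.sum_mul, hTcol]
    simpa using hr
  have key : (∑ i, Real.sqrt (p i * q i)) ≤
      ∑ j, Real.sqrt ((∑ i, T j i * p i) * (∑ i, T j i * q i)) := by
    calc ∑ i, Real.sqrt (p i * q i)
        = ∑ i, ∑ j, T j i * Real.sqrt (p i * q i) := by
          simp_rw [← Finset.sum_mul, hTcol, one_mul]
      _ = ∑ j, ∑ i, Real.sqrt ((T j i * p i) * (T j i * q i)) := by
          rw [Finset.sum_comm]
          congr 1; ext j; congr 1; ext i
          rw [show T j i * p i * (T j i * q i) = (T j i)^2 * (p i * q i) by ring,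
            Real.sqrt_mul (sq_nonneg _), Real.sqrt_sq (hT j i)]
      _ ≤ ∑ j, Real.sqrt ((∑ i, T j i * p i) * (∑ i, T j i * q i)) := by
          refine Finset.sum_le_sum fun j _ => ?_
          exact sum_sqrt_mul_le _ _ (fun i => mul_nonneg (hT j i) (hp i))
            (fun i => mul_nonneg (hT j i) (hq i))
  refine ⟨hpos p hp, hsum p hp1, hpos q hq, hsum q hq1, key, ?_⟩
  unfold dFR
  have := arccos_anti key
  linarith
end
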